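/- arXiv:2302.12543 — 2 statements merged into one kernel-verified Lean document; each statement's English description precedes it below -/
import Mathlib

section
/- Let d ≥ 2, 0 ≤ p ≤ d, with ε_i = 1 for i ≤ p and ε_i = −1 for i > p. Let U ⊆ ℝ^d be a connected open set and ψ : U → ℝ a smooth function such that ∂_i∂_j ψ = 0 on U for all i ≠ j and ε_i ∂_i∂_i ψ = ε_j ∂_j∂_j ψ on U for all i,j. Then there exist a constant K ∈ ℝ, a vector b ∈ ℝ^d and a constant c ∈ ℝ such that ψ(x) = (K/2) Σ_i ε_i x_i² + Σ_i b_i x_i + c for all x ∈ U. Conversely, every function of this form satisfies those partial differential equations. -/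
/-- The second partial derivative `∂_j ∂_k f`. -/
noncomputable def sder {d : ℕ} (f : (Fin d → ℝ) → ℝ) (j k : Fin d) (x : Fin d → ℝ) : ℝ :=
  fderiv ℝ (fun y => fderiv ℝ f y (Pi.single k 1)) x (Pi.single j 1)

/-- The sign `ε_i` of the standard quadratic form of signature `(p, d−p)`. -/
def eps (d p : ℕ) (i : Fin d) : ℝ := if (i : ℕ) < p then 1 else -1

/-- The function `(K/2)·q(x) + Σ_i b_i x_i + c` where `q` is the standard quadratic
form of signature `(p, d−p)`. -/
noncomputable def polyPot (d p : ℕ) (K : ℝ) (b : Fin d → ℝ) (c : ℝ) (x : Fin d → ℝ) : ℝ :=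
  K / 2 * (∑ i, eps d p i * x i ^ 2) + (∑ i, b i * x i) + c

/-!
Symmetry of third derivatives gives `∂_i (∂_j ∂_j ψ) = ∂_j (∂_i ∂_j ψ) = 0` for `i ≠ j`. As `d ≥ 2`,
every direction `i` is transverse to some `j`, so the common value `K` of `ε_j ∂_j ∂_j ψ` has
vanishing gradient and is constant on the connected set `U`. The Hessian of `ψ` is then the
constant `diag (K ε_i)`, that of `(K/2) q`; hence each `∂_k ψ` differs from `∂_k ((K/2) q)` by a
constant `b_k`, and `ψ` differs from `(K/2) q + Σ b_k x_k` by a constant `c`.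
-/

open Set

noncomputable def pderiv {d : ℕ} {F : Type*} [NormedAddCommGroup F] [NormedSpace ℝ F]
    (f : (Fin d → ℝ) → F) (k : Fin d) (x : Fin d → ℝ) : F :=
  fderiv ℝ f x (Pi.single k 1)

section PartialDerivatives

variable {d : ℕ} {F : Type*} [NormedAddCommGroup F] [NormedSpace ℝ F]
  {U : Set (Fin d → ℝ)} {f g : (Fin d → ℝ) → F} {x : Fin d → ℝ}

theorem pderiv_pderiv (f : (Fin d → ℝ) → ℝ) (j k : Fin d) :
    pderiv (pderiv f k) j = sder f j k := rfl

theorem fderiv_eq_of_pderiv_eq (h : ∀ k, pderiv f k x = pderiv g k x) :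
    fderiv ℝ f x = fderiv ℝ g x :=
  ContinuousLinearMap.coe_injective <| (Pi.basisFun ℝ (Fin d)).ext fun k => by
    simp only [Pi.basisFun_apply, ContinuousLinearMap.coe_coe]
    exact h k

theorem IsOpen.pderiv_eqOn (hU : IsOpen U) (h : EqOn f g U) (k : Fin d) :
    EqOn (pderiv f k) (pderiv g k) U := fun x hx => by
  rw [pderiv, pderiv, (h.eventuallyEq_of_mem (hU.mem_nhds hx)).fderiv_eq]

theorem pderiv_const_smul (c : ℝ) (f : (Fin d → ℝ) → F) (k : Fin d) :
    pderiv (fun y => c • f y) k = c • pderiv f k := by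
  ext x
  change fderiv ℝ (c • f) x _ = _
  rw [fderiv_const_smul_field]
  rfl

theorem pderiv_const (a : F) (k : Fin d) : pderiv (fun _ => a) k = 0 := by
  ext x
  simp [pderiv]

theorem ContDiffOn.pderiv {n m : WithTop ℕ∞} (hf : ContDiffOn ℝ n f U) (hU : IsOpen U)
    (hmn : m + 1 ≤ n) (k : Fin d) : ContDiffOn ℝ m (pderiv f k) U :=
  (hf.fderiv_of_isOpen hU hmn).clm_apply contDiffOn_const

theorem IsOpen.exists_eq_add_of_pderiv_eq (hU : IsOpen U) (hU' : IsPreconnected U)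
    (hf : DifferentiableOn ℝ f U) (hg : DifferentiableOn ℝ g U)
    (h : ∀ x ∈ U, ∀ k, pderiv f k x = pderiv g k x) : ∃ c, ∀ x ∈ U, f x = g x + c :=
  hU.exists_eq_add_of_fderiv_eq hU' hf hg fun x hx => fderiv_eq_of_pderiv_eq (h x hx)

end PartialDerivatives

theorem sder_comm {d : ℕ} {f : (Fin d → ℝ) → ℝ} {x : Fin d → ℝ} (hf : ContDiffAt ℝ 2 f x)
    (i j : Fin d) : sder f i j x = sder f j i x := by
  have hf' : DifferentiableAt ℝ (fderiv ℝ f) x :=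
    (hf.fderiv_right (m := 1) le_rfl).differentiableAt one_ne_zero
  have hsder : ∀ i j, sder f i j x = fderiv ℝ (fderiv ℝ f) x (Pi.single i 1) (Pi.single j 1) :=
    fun i j => by
      rw [sder, fderiv_clm_apply hf' (differentiableAt_const _)]
      simp
  rw [hsder, hsder, hf.isSymmSndFDerivAt (by simp)]

theorem IsOpen.exists_mul_sder_self_eq_const {d : ℕ} (hd : 2 ≤ d) {U : Set (Fin d → ℝ)}
    (hU : IsOpen U) (hU' : IsPreconnected U) {ψ : (Fin d → ℝ) → ℝ} (hψ : ContDiffOn ℝ 3 ψ U)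
    (w : Fin d → ℝ) (hoff : ∀ x ∈ U, ∀ i j, i ≠ j → sder ψ i j x = 0)
    (hdiag : ∀ x ∈ U, ∀ i j, w i * sder ψ i i x = w j * sder ψ j j x) :
    ∃ K, ∀ x ∈ U, ∀ i, w i * sder ψ i i x = K := by
  have : Nontrivial (Fin d) := Fin.nontrivial_iff_two_le.2 hd
  have hC2 : ∀ j, ContDiffOn ℝ 2 (pderiv ψ j) U := hψ.pderiv hU (by norm_num)
  have hC1 : ∀ j, ContDiffOn ℝ 1 (sder ψ j j) U := fun j => (hC2 j).pderiv hU (by norm_num) j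
  have htransverse : ∀ x ∈ U, ∀ i j, i ≠ j → pderiv (sder ψ j j) i x = 0 := by
    intro x hx i j hij
    calc pderiv (sder ψ j j) i x = sder (pderiv ψ j) i j x := rfl
      _ = sder (pderiv ψ j) j i x := sder_comm ((hC2 j).contDiffAt (hU.mem_nhds hx)) i j
      _ = pderiv (sder ψ i j) j x := rfl
      _ = pderiv (fun _ => (0 : ℝ)) j x := hU.pderiv_eqOn (fun y hy => hoff y hy i j hij) j hx
      _ = 0 := by rw [pderiv_const]; rfl
  obtain ⟨i₀⟩ : Nonempty (Fin d) := inferInstance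
  obtain ⟨K, hK⟩ : ∃ K, ∀ x ∈ U, w i₀ * sder ψ i₀ i₀ x = K := by
    refine hU.exists_is_const_of_fderiv_eq_zero hU' ((hC1 i₀).differentiableOn one_ne_zero
      |>.const_mul _) fun x hx => ?_
    refine (fderiv_eq_of_pderiv_eq (g := fun _ => (0 : ℝ)) fun i => ?_).trans (by simp)
    obtain ⟨j, hji⟩ := exists_ne i
    calc pderiv (fun y => w i₀ * sder ψ i₀ i₀ y) i x
        = pderiv (fun y => w j • sder ψ j j y) i x :=
          hU.pderiv_eqOn (fun y hy => hdiag y hy i₀ j) i hx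
      _ = 0 := by rw [pderiv_const_smul, Pi.smul_apply, htransverse x hx i j hji.symm, smul_zero]
      _ = pderiv (fun _ => (0 : ℝ)) i x := by rw [pderiv_const]; rfl
  exact ⟨K, fun x hx i => (hdiag x hx i i₀).trans (hK x hx)⟩

section PolyPot

variable {d p : ℕ} {K : ℝ} {b : Fin d → ℝ} {c : ℝ}

theorem eps_mul_self (i : Fin d) : eps d p i * eps d p i = 1 := by
  unfold eps
  split_ifs <;> norm_num

theorem differentiable_polyPot : Differentiable ℝ (polyPot d p K b c) := by
  unfold polyPot
  fun_prop

theorem pderiv_polyPot (k : Fin d) :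
    pderiv (polyPot d p K b c) k = fun x => K * eps d p k * x k + b k := by
  ext x
  unfold pderiv polyPot
  simp (disch := fun_prop) [fderiv_fun_add, fderiv_fun_sum, fderiv_const_mul, fderiv_fun_pow,
    fderiv_apply, Pi.single_apply]
  ring

theorem sder_polyPot (j k : Fin d) (x : Fin d → ℝ) :
    sder (polyPot d p K b c) j k x = if j = k then K * eps d p k else 0 := by
  rw [← pderiv_pderiv, pderiv_polyPot]
  unfold pderiv
  simp (disch := fun_prop) [fderiv_const_mul, fderiv_apply, Pi.single_apply, eq_comm]

theorem IsOpen.exists_eq_polyPot_of_sder_eq {U : Set (Fin d → ℝ)} (hU : IsOpen U)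
    (hU' : IsPreconnected U) {ψ : (Fin d → ℝ) → ℝ} (hψ : ContDiffOn ℝ 2 ψ U)
    (h : ∀ x ∈ U, ∀ i j, sder ψ i j x = if i = j then K * eps d p j else 0) :
    ∃ (b : Fin d → ℝ) (c : ℝ), ∀ x ∈ U, ψ x = polyPot d p K b c x := by
  have hψ' : ∀ k, DifferentiableOn ℝ (pderiv ψ k) U := fun k =>
    (hψ.pderiv hU (by norm_num) k).differentiableOn one_ne_zero
  obtain ⟨b, hb⟩ : ∃ b : Fin d → ℝ, ∀ k, ∀ x ∈ U, pderiv ψ k x = K * eps d p k * x k + b k := by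
    choose b hb using fun k => hU.exists_eq_add_of_pderiv_eq hU' (hψ' k)
      (g := pderiv (polyPot d p K 0 0) k) (by rw [pderiv_polyPot]; fun_prop)
      fun x hx j => (h x hx j k).trans (sder_polyPot j k x).symm
    exact ⟨b, fun k x hx => by simpa [pderiv_polyPot] using hb k x hx⟩
  obtain ⟨c, hc⟩ := hU.exists_eq_add_of_pderiv_eq hU' (hψ.differentiableOn two_ne_zero)
    differentiable_polyPot.differentiableOn fun x hx k => by
      rw [hb k x hx, pderiv_polyPot (b := b) (c := 0)]
  exact ⟨b, c, fun x hx => by rw [hc x hx, polyPot, polyPot, add_zero]⟩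

end PolyPot

theorem stmt11_general (d p : ℕ) (hd : 2 ≤ d)
    (U : Set (Fin d → ℝ)) (hUopen : IsOpen U) (hUconn : IsConnected U)
    (ψ : (Fin d → ℝ) → ℝ) (hψ : ContDiffOn ℝ (⊤ : ℕ∞) ψ U) :
    ((∀ x ∈ U, ∀ i j : Fin d, i ≠ j → sder ψ i j x = 0) →
      (∀ x ∈ U, ∀ i j : Fin d, eps d p i * sder ψ i i x = eps d p j * sder ψ j j x) →
      ∃ (K : ℝ) (b : Fin d → ℝ) (c : ℝ), ∀ x ∈ U, ψ x = polyPot d p K b c x) ∧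
    (∀ (K : ℝ) (b : Fin d → ℝ) (c : ℝ),
      (∀ x ∈ U, ∀ i j : Fin d, i ≠ j → sder (polyPot d p K b c) i j x = 0) ∧
      (∀ x ∈ U, ∀ i j : Fin d,
        eps d p i * sder (polyPot d p K b c) i i x
          = eps d p j * sder (polyPot d p K b c) j j x)) := by
  have hψ3 : ContDiffOn ℝ 3 ψ U := hψ.of_le (WithTop.coe_le_coe.2 le_top)
  refine ⟨fun hoff hdiag => ?_, fun K b c => ⟨fun x _ i j hij => ?_, fun x _ i j => ?_⟩⟩
  · obtain ⟨K, hK⟩ := hUopen.exists_mul_sder_self_eq_const hd hUconn.isPreconnected hψ3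
      (eps d p) hoff hdiag
    refine ⟨K, hUopen.exists_eq_polyPot_of_sder_eq hUconn.isPreconnected
      (hψ3.of_le (by norm_num)) fun x hx i j => ?_⟩
    split_ifs with hij
    · subst hij
      rw [← hK x hx i, mul_comm, ← mul_assoc, eps_mul_self, one_mul]
    · exact hoff x hx i j hij
  · simp [sder_polyPot, hij]
  · simp [sder_polyPot, mul_left_comm _ K, eps_mul_self]

/-- A smooth function `ψ` on a connected open set satisfies `∂_i∂_j ψ = 0` for
`i ≠ j` and `ε_i ∂_i∂_i ψ = ε_j ∂_j∂_j ψ` iff it has the form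
`ψ = (K/2)q + Λ` with `Λ` affine (the classification of potentials of stiff
connections). -/
theorem stmt11 (d p : ℕ) (hd : 2 ≤ d) (hp : p ≤ d)
    (U : Set (Fin d → ℝ)) (hUopen : IsOpen U) (hUconn : IsConnected U)
    (ψ : (Fin d → ℝ) → ℝ) (hψ : ContDiffOn ℝ (⊤ : ℕ∞) ψ U) :
    ((∀ x ∈ U, ∀ i j : Fin d, i ≠ j → sder ψ i j x = 0) →
      (∀ x ∈ U, ∀ i j : Fin d, eps d p i * sder ψ i i x = eps d p j * sder ψ j j x) →
      ∃ (K : ℝ) (b : Fin d → ℝ) (c : ℝ), ∀ x ∈ U, ψ x = polyPot d p K b c x) ∧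
    (∀ (K : ℝ) (b : Fin d → ℝ) (c : ℝ),
      (∀ x ∈ U, ∀ i j : Fin d, i ≠ j → sder (polyPot d p K b c) i j x = 0) ∧
      (∀ x ∈ U, ∀ i j : Fin d,
        eps d p i * sder (polyPot d p K b c) i i x
          = eps d p j * sder (polyPot d p K b c) j j x)) :=
  stmt11_general d p hd U hUopen hUconn ψ hψ
end

section
/- Let d ≥ 2, 0 ≤ p ≤ d, with ε_i = 1 for i ≤ p and ε_i = −1 for i > p, bilinear form x·y = Σ_i ε_i x_i y_i and q(x) = x·x on ℝ^d, and λ ∈ ℝ. Let e ∈ ℝ^d with q(e) ∈ {−1, 1}, set ψ(x) = q(x) + λ, and let I ⊆ (0,∞) be an interval with t₀ ∈ I such that ψ(t·e) = λ + t² q(e) ≠ 0 for all t ∈ I. Let γ(t) = t·e and let c ∈ ℝ and w ∈ ℝ^d with w·e = 0. Then the function v(t) = (ψ(t e)/ψ(t₀ e))² · c e + (ψ(t e)/ψ(t₀ e)) · w is the unique solution on I of the parallel-transport equation v'(t) = (2/ψ(γ(t))) · ( (γ(t)·γ'(t)) v(t) + (γ(t)·v(t)) γ'(t) ) with initial value v(t₀)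 = c e + w. In particular, in an orthonormal basis whose first vector is e, the parallel transport along γ from time t₀ to time t₁ is the diagonal matrix Diag(Λ², Λ, …, Λ) with Λ = ψ(γ(t₁))/ψ(γ(t₀)). -/
/-- The standard bilinear form of signature `(p, d−p)` on `ℝ^d`. -/
def bform (d p : ℕ) (x y : Fin d → ℝ) : ℝ := ∑ i, eps d p i * x i * y i

/-- The standard quadratic form of signature `(p, d−p)` on `ℝ^d`. -/
def qf (d p : ℕ) (x : Fin d → ℝ) : ℝ := ∑ i, eps d p i * x i ^ 2

/-- The explicit parallel transport along the ray `t ↦ t·e` in a canonical model of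
potential `ψ = q + λ`: radial parts scale like `ψ²`, orthoradial parts like `ψ`. -/
noncomputable def rayPT (d p : ℕ) (lam : ℝ) (e w : Fin d → ℝ) (c t₀ t : ℝ) :
    Fin d → ℝ :=
  (((qf d p (t • e) + lam) / (qf d p (t₀ • e) + lam)) ^ 2 * c) • e
    + ((qf d p (t • e) + lam) / (qf d p (t₀ • e) + lam)) • w

section Bform

variable {d p : ℕ}

lemma bform_comm (x y : Fin d → ℝ) : bform d p x y = bform d p y x :=
  Finset.sum_congr rfl fun _ _ => by ring

lemma bform_self (x : Fin d → ℝ) : bform d p x x = qf d p x :=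
  Finset.sum_congr rfl fun _ _ => by ring

lemma bform_smul_left (t : ℝ) (x y : Fin d → ℝ) :
    bform d p (t • x) y = t * bform d p x y := by
  simp only [bform, Finset.mul_sum, Pi.smul_apply, smul_eq_mul]
  exact Finset.sum_congr rfl fun _ _ => by ring

lemma bform_smul_right (t : ℝ) (x y : Fin d → ℝ) :
    bform d p x (t • y) = t * bform d p x y := by
  rw [bform_comm, bform_smul_left, bform_comm]

lemma bform_add_right (x y z : Fin d → ℝ) :
    bform d p x (y + z) = bform d p x y + bform d p x z := by
  simp only [bform, ← Finset.sum_add_distrib, Pi.add_apply]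
  exact Finset.sum_congr rfl fun _ _ => by ring

lemma bform_sub_right (x y z : Fin d → ℝ) :
    bform d p x (y - z) = bform d p x y - bform d p x z := by
  simp only [bform, ← Finset.sum_sub_distrib, Pi.sub_apply]
  exact Finset.sum_congr rfl fun _ _ => by ring

lemma qf_smul (t : ℝ) (x : Fin d → ℝ) : qf d p (t • x) = t ^ 2 * qf d p x := by
  simp only [qf, Finset.mul_sum, Pi.smul_apply, smul_eq_mul]
  exact Finset.sum_congr rfl fun _ _ => by ring

lemma HasDerivWithinAt.const_bform (x : Fin d → ℝ) {u : ℝ → Fin d → ℝ} {u' : Fin d → ℝ}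
    {s : Set ℝ} {t : ℝ} (hu : HasDerivWithinAt u u' s t) :
    HasDerivWithinAt (fun r => bform d p x (u r)) (bform d p x u') s t := by
  unfold bform
  refine HasDerivWithinAt.fun_sum fun i _ => ?_
  simpa [mul_assoc] using (hasDerivWithinAt_pi.1 hu i).const_mul (eps d p i * x i)

end Bform

section Convex

variable {E : Type*} [NormedAddCommGroup E] [NormedSpace ℝ E] {I : Set ℝ}

lemma Convex.is_const_of_hasDerivWithinAt_zero (hI : Convex ℝ I) {f : ℝ → E}
    (hf : ∀ t ∈ I, HasDerivWithinAt f 0 I t) {x y : ℝ} (hx : x ∈ I) (hy : y ∈ I) :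
    f x = f y := by
  have h := hI.norm_image_sub_le_of_norm_hasDerivWithin_le (C := 0) hf (fun _ _ => by simp) hx hy
  rw [zero_mul, norm_le_zero_iff, sub_eq_zero] at h
  exact h.symm

lemma Convex.eq_div_smul_of_hasDerivWithinAt (hI : Convex ℝ I) {f : ℝ → E} {g g' : ℝ → ℝ}
    (hg : ∀ t ∈ I, HasDerivWithinAt g (g' t) I t) (hg0 : ∀ t ∈ I, g t ≠ 0)
    (hf : ∀ t ∈ I, HasDerivWithinAt f ((g' t / g t) • f t) I t) {t₀ t : ℝ}
    (ht₀ : t₀ ∈ I) (ht : t ∈ I) : f t = (g t / g t₀) • f t₀ := by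
  have hquot : ∀ r ∈ I, HasDerivWithinAt (fun s => (g s)⁻¹ • f s) 0 I r := by
    intro r hr
    have hr0 := hg0 r hr
    refine (((hg r hr).inv hr0).fun_smul (hf r hr)).congr_deriv ?_
    rw [smul_smul, ← add_smul, Pi.inv_apply,
      show (g r)⁻¹ * (g' r / g r) + -g' r / g r ^ 2 = 0 by ring, zero_smul]
  have h := hI.is_const_of_hasDerivWithinAt_zero hquot ht ht₀
  rw [div_eq_mul_inv, mul_smul, ← h, smul_inv_smul₀ (hg0 t ht)]

end Convex

section Ray

variable {d p : ℕ} {lam : ℝ} {e : Fin d → ℝ}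

/-- The right-hand side `(2/ψ(γ)) ((γ·γ') v + (γ·v) γ')` of the transport equation along
`γ(t) = t • e`. -/
noncomputable def rayField (d p : ℕ) (lam : ℝ) (e : Fin d → ℝ) (t : ℝ) (v : Fin d → ℝ) :
    Fin d → ℝ :=
  (2 / (qf d p (t • e) + lam)) • (bform d p (t • e) e • v + bform d p (t • e) v • e)

lemma hasDerivAt_qf_smul_add (e : Fin d → ℝ) (lam t : ℝ) :
    HasDerivAt (fun s : ℝ => qf d p (s • e) + lam) (2 * t * qf d p e) t := by
  simp only [qf_smul]
  simpa using ((hasDerivAt_pow 2 t).mul_const (qf d p e)).add_const lam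

lemma rayField_eq (t : ℝ) (v : Fin d → ℝ) :
    rayField d p lam e t v = (2 * t * qf d p e / (qf d p (t • e) + lam)) • v
      + (2 * t / (qf d p (t • e) + lam) * bform d p e v) • e := by
  rw [rayField, bform_smul_left, bform_smul_left, bform_self, smul_add, smul_smul, smul_smul]
  congr 2 <;> ring

lemma rayField_sub (t : ℝ) (u v : Fin d → ℝ) :
    rayField d p lam e t (u - v) = rayField d p lam e t u - rayField d p lam e t v := by
  simp only [rayField_eq, bform_sub_right]
  module

lemma rayPT_self {w : Fin d → ℝ} {c t₀ : ℝ} (ht₀ : qf d p (t₀ • e) + lam ≠ 0) :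
    rayPT d p lam e w c t₀ t₀ = c • e + w := by
  simp [rayPT, div_self ht₀]

lemma hasDerivAt_rayPT {w : Fin d → ℝ} (hw : bform d p w e = 0) (c : ℝ) {t₀ t : ℝ}
    (ht₀ : qf d p (t₀ • e) + lam ≠ 0) (ht : qf d p (t • e) + lam ≠ 0) :
    HasDerivAt (rayPT d p lam e w c t₀) (rayField d p lam e t (rayPT d p lam e w c t₀ t)) t := by
  have hratio := (hasDerivAt_qf_smul_add (p := p) e lam t).div_const (qf d p (t₀ • e) + lam)
  refine ((((hratio.pow 2).mul_const c).smul_const e).add (hratio.smul_const w)).congr_deriv ?_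
  rw [rayField_eq, rayPT, bform_add_right, bform_smul_right, bform_smul_right, bform_self,
    bform_comm e w, hw]
  ext i
  simp only [Nat.cast_ofNat, Nat.add_one_sub_one, pow_one, Pi.add_apply, Pi.smul_apply,
    smul_eq_mul, smul_add, mul_zero, add_zero]
  field_simp
  ring

lemma eq_zero_of_hasDerivWithinAt_rayField {I : Set ℝ} (hI : Convex ℝ I)
    (hne : ∀ t ∈ I, qf d p (t • e) + lam ≠ 0) {u : ℝ → Fin d → ℝ}
    (hu : ∀ t ∈ I, HasDerivWithinAt u (rayField d p lam e t (u t)) I t) {t₀ t : ℝ}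
    (ht₀ : t₀ ∈ I) (hu₀ : u t₀ = 0) (ht : t ∈ I) : u t = 0 := by
  have hψ : ∀ r, HasDerivWithinAt (fun s : ℝ => qf d p (s • e) + lam) (2 * r * qf d p e) I r :=
    fun r => (hasDerivAt_qf_smul_add e lam r).hasDerivWithinAt
  have hβ : ∀ r ∈ I, bform d p e (u r) = 0 := by
    intro r hr
    have hβ' : ∀ s ∈ I, HasDerivWithinAt (fun s => bform d p e (u s))
        ((2 * (qf d p (s • e) + lam) * (2 * s * qf d p e) / (qf d p (s • e) + lam) ^ 2)
          • bform d p e (u s)) I s := by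
      intro s hs
      refine ((hu s hs).const_bform e).congr_deriv ?_
      rw [rayField_eq, bform_add_right, bform_smul_right, bform_smul_right, bform_self,
        smul_eq_mul]
      have hs0 := hne s hs
      field_simp
      ring
    have := hI.eq_div_smul_of_hasDerivWithinAt (fun s _ => by simpa using (hψ s).fun_pow 2)
      (fun s hs => pow_ne_zero 2 (hne s hs)) hβ' ht₀ hr
    simpa [hu₀, bform] using this
  have := hI.eq_div_smul_of_hasDerivWithinAt (fun s _ => hψ s) hne
    (fun s hs => by simpa [rayField_eq, hβ s hs] using hu s hs) ht₀ ht
  rw [this, hu₀, smul_zero]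

end Ray

theorem stmt17_general (d p : ℕ) (lam : ℝ)
    (e : Fin d → ℝ)
    (I : Set ℝ) (hIconv : Convex ℝ I)
    (t₀ : ℝ) (ht₀ : t₀ ∈ I)
    (hne : ∀ t ∈ I, qf d p (t • e) + lam ≠ 0)
    (c : ℝ) (w : Fin d → ℝ) (hw : bform d p w e = 0) :
    rayPT d p lam e w c t₀ t₀ = c • e + w ∧
    (∀ t ∈ I, HasDerivWithinAt (rayPT d p lam e w c t₀)
      ((2 / (qf d p (t • e) + lam)) •
        (bform d p (t • e) e • rayPT d p lam e w c t₀ t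
          + bform d p (t • e) (rayPT d p lam e w c t₀ t) • e)) I t) ∧
    (∀ u : ℝ → Fin d → ℝ, u t₀ = c • e + w →
      (∀ t ∈ I, HasDerivWithinAt u
        ((2 / (qf d p (t • e) + lam)) •
          (bform d p (t • e) e • u t + bform d p (t • e) (u t) • e)) I t) →
      ∀ t ∈ I, u t = rayPT d p lam e w c t₀ t) := by
  have hsol : ∀ t ∈ I, HasDerivWithinAt (rayPT d p lam e w c t₀)
      (rayField d p lam e t (rayPT d p lam e w c t₀ t)) I t := fun t ht =>
    (hasDerivAt_rayPT hw c (hne t₀ ht₀) (hne t ht)).hasDerivWithinAt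
  refine ⟨rayPT_self (hne t₀ ht₀), hsol, fun u hu₀ hu t ht => ?_⟩
  refine sub_eq_zero.1 (eq_zero_of_hasDerivWithinAt_rayField hIconv hne
    (u := u - rayPT d p lam e w c t₀) (fun r hr => ?_) ht₀
    (by rw [Pi.sub_apply, hu₀, rayPT_self (hne t₀ ht₀), sub_self]) ht)
  rw [Pi.sub_apply, rayField_sub]
  exact (hu r hr).sub (hsol r hr)

/-- Along the ray `γ(t) = t·e` (with `q(e) = ±1`), the function
`v(t) = (ψ(te)/ψ(t₀e))²·c e + (ψ(te)/ψ(t₀e))·w` is the unique solution of the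
parallel-transport equation `v' = (2/ψ(γ))((γ·γ')v + (γ·v)γ')` with initial value
`v(t₀) = c e + w`, where `w ⟂ e`. -/
theorem stmt17 (d p : ℕ) (hd : 2 ≤ d) (hp : p ≤ d) (lam : ℝ)
    (e : Fin d → ℝ) (he : qf d p e = 1 ∨ qf d p e = -1)
    (I : Set ℝ) (hIpos : I ⊆ Set.Ioi (0 : ℝ)) (hIconv : Convex ℝ I)
    (t₀ : ℝ) (ht₀ : t₀ ∈ I)
    (hne : ∀ t ∈ I, qf d p (t • e) + lam ≠ 0)
    (c : ℝ) (w : Fin d → ℝ) (hw : bform d p w e = 0) :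
    rayPT d p lam e w c t₀ t₀ = c • e + w ∧
    (∀ t ∈ I, HasDerivWithinAt (rayPT d p lam e w c t₀)
      ((2 / (qf d p (t • e) + lam)) •
        (bform d p (t • e) e • rayPT d p lam e w c t₀ t
          + bform d p (t • e) (rayPT d p lam e w c t₀ t) • e)) I t) ∧
    (∀ u : ℝ → Fin d → ℝ, u t₀ = c • e + w →
      (∀ t ∈ I, HasDerivWithinAt u
        ((2 / (qf d p (t • e) + lam)) •
          (bform d p (t • e) e • u t + bform d p (t • e) (u t) • e)) I t) →
      ∀ t ∈ I, u t = rayPT d p lam e w c t₀ t) :=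
  stmt17_general d p lam e I hIconv t₀ ht₀ hne c w hw
end
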